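/- Let u have continuous partial derivatives up to order 2 on T and let v = (v₀, v_b, 𝐯_g) be a triple with v₀ ∈ Q_k(T), v_b ∈ L²(∂T) and 𝐯_g ∈ L²(∂T)². Then (Δ_w(Q_N u), Δ_w v)_T = (Δu, Δv₀)_T + ⟨v₀ − v_b, ∇(Q₀Δu)·𝐧⟩_{∂T} − ⟨(∇v₀ − 𝐯_g)·𝐧, Q₀Δu⟩_{∂T}. -/

import Mathlib

open MeasureTheory Real

noncomputable section

/-- `Q_k`: real polynomials in two variables of degree at most `k` in each variable. -/
def IsQk (k : ℕ) (v : ℝ → ℝ → ℝ) : Prop :=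
  ∃ p : MvPolynomial (Fin 2) ℝ, (∀ i, p.degreeOf i ≤ k) ∧
    ∀ x y : ℝ, v x y = MvPolynomial.eval ![x, y] p

/-- `P_k`: real polynomials in one variable of degree at most `k`. -/
def IsPk (k : ℕ) (f : ℝ → ℝ) : Prop :=
  ∃ p : Polynomial ℝ, p.natDegree ≤ k ∧ ∀ x : ℝ, f x = p.eval x

/-- Partial derivative in the first variable. -/
def pd1 (w : ℝ → ℝ → ℝ) : ℝ → ℝ → ℝ := fun x y => deriv (fun t => w t y) x

/-- Partial derivative in the second variable. -/
def pd2 (w : ℝ → ℝ → ℝ) : ℝ → ℝ → ℝ := fun x y => deriv (fun t => w x t) y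

/-- Laplacian. -/
def lapl (w : ℝ → ℝ → ℝ) : ℝ → ℝ → ℝ :=
  fun x y => pd1 (pd1 w) x y + pd2 (pd2 w) x y

/-- L² inner product over the rectangle `[x0,x1] × [y0,y1]`. -/
def ipT (x0 x1 y0 y1 : ℝ) (f g : ℝ → ℝ → ℝ) : ℝ :=
  ∫ x in x0..x1, ∫ y in y0..y1, f x y * g x y

/-- Squared L² norm over the rectangle `[x0,x1] × [y0,y1]`. -/
def normSqT (x0 x1 y0 y1 : ℝ) (w : ℝ → ℝ → ℝ) : ℝ := ipT x0 x1 y0 y1 w w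

/-- Squared L² norm over the two edges parallel to the x-axis (`∂T₁`). -/
def normSqE1 (x0 x1 y0 y1 : ℝ) (w : ℝ → ℝ → ℝ) : ℝ :=
  ∫ x in x0..x1, ((w x y0) ^ 2 + (w x y1) ^ 2)

/-- Squared L² norm over the two edges parallel to the y-axis (`∂T₂`). -/
def normSqE2 (x0 x1 y0 y1 : ℝ) (w : ℝ → ℝ → ℝ) : ℝ :=
  ∫ y in y0..y1, ((w x0 y) ^ 2 + (w x1 y) ^ 2)

/-- `P` is the L²(T)-orthogonal projection of `φ` onto `Q_k(T)`. -/
def IsProjT (k : ℕ) (x0 x1 y0 y1 : ℝ) (φ P : ℝ → ℝ → ℝ) : Prop :=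
  IsQk k P ∧ ∀ q : ℝ → ℝ → ℝ, IsQk k q →
    ipT x0 x1 y0 y1 (fun x y => φ x y - P x y) q = 0

/-- `g` is the L²(e)-orthogonal projection of `f` onto `P_k(e)`, for an edge
parametrized by `[a,b]`. -/
def IsProjE (k : ℕ) (a b : ℝ) (f g : ℝ → ℝ) : Prop :=
  IsPk k g ∧ ∀ q : ℝ → ℝ, IsPk k q → (∫ x in a..b, (f x - g x) * q x) = 0

/-- `f` belongs to `L²` of the edge parametrized by `[a,b]`. -/
def L2Edge (a b : ℝ) (f : ℝ → ℝ) : Prop :=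
  IntervalIntegrable f MeasureTheory.volume a b ∧
    IntervalIntegrable (fun x => (f x) ^ 2) MeasureTheory.volume a b

/-!
Tested against `φ ∈ Q_k(T)`, the definition of `Δ_w(Q_N u)` loses all its projections: `Δφ`
lies in `Q_k(T)` and the edge traces of `φ` and `∇φ` lie in `P_k(e)`. Green's second identity
then turns what is left into `(Δu, φ)_T`, i.e. `Δ_w Q_N u = Q₀Δu`. Hence
`(Δ_w Q_N u, Δ_w v)_T = (Δ_w v, Q₀Δu)_T`, which the definition of `Δ_w v` and Green's identity
for `v₀` and `Q₀Δu` expand into `(Δv₀, Q₀Δu)_T` plus the boundary terms; finally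
`(Δv₀, Q₀Δu)_T = (Δv₀, Δu)_T` because `Δv₀ ∈ Q_k(T)`.
-/

open Function

namespace MvPolynomial

theorem hasDerivAt_eval_update {σ : Type*} [DecidableEq σ] (p : MvPolynomial σ ℝ)
    (z : σ → ℝ) (i : σ) (t : ℝ) :
    HasDerivAt (fun s => eval (update z i s) p) (eval (update z i t) (pderiv i p)) t := by
  induction p using MvPolynomial.induction_on with
  | C a => simpa using hasDerivAt_const t a
  | add p q hp hq => simp only [map_add]; exact hp.add hq
  | mul_X p j hp =>
    have hj : HasDerivAt (fun s => update z i s j) (Pi.single (M := fun _ => ℝ) i 1 j) t := by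
      simpa using hasDerivAt_pi.1 (hasDerivAt_update z i t) j
    simp only [map_mul, eval_X]
    refine (hp.mul hj).congr_deriv ?_
    by_cases h : j = i
    · subst h; simp [Derivation.leibniz]; ring
    · simp [Derivation.leibniz, pderiv_X_of_ne h, h, mul_comm]

theorem degreeOf_pderiv_le {σ R : Type*} [CommSemiring R] (i j : σ) (p : MvPolynomial σ R) :
    degreeOf j (pderiv i p) ≤ degreeOf j p := by
  refine degreeOf_le_iff.2 fun m hm => ?_
  rw [mem_support_iff, coeff_pderiv] at hm
  exact (Nat.le_add_right _ _).trans
    (monomial_le_degreeOf j (mem_support_iff.2 (left_ne_zero_of_mul hm)))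

theorem contDiff_eval {σ : Type*} [Fintype σ] (p : MvPolynomial σ ℝ) {n : WithTop ℕ∞} :
    ContDiff ℝ n fun z : σ → ℝ => eval z p := by
  induction p using MvPolynomial.induction_on with
  | C a => simpa using contDiff_const
  | add p q hp hq => simpa using hp.add hq
  | mul_X p i hp => simpa using hp.mul (contDiff_apply ℝ ℝ i)

end MvPolynomial

open MvPolynomial

theorem IsPk.continuous {k : ℕ} {f : ℝ → ℝ} (hf : IsPk k f) : Continuous f := by
  obtain ⟨p, -, hp⟩ := hf
  simpa only [← funext hp] using p.continuous

theorem IsPk.neg {k : ℕ} {f : ℝ → ℝ} (hf : IsPk k f) : IsPk k (fun x => -f x) := by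
  obtain ⟨p, hdeg, hp⟩ := hf
  exact ⟨-p, (Polynomial.natDegree_neg p).trans_le hdeg, fun x => by simp [hp]⟩

namespace IsQk

variable {k : ℕ} {v w : ℝ → ℝ → ℝ}

theorem contDiff (hv : IsQk k v) {n : WithTop ℕ∞} : ContDiff ℝ n (uncurry v) := by
  obtain ⟨p, -, hp⟩ := hv
  have hpair : ContDiff ℝ n fun q : ℝ × ℝ => ![q.1, q.2] :=
    contDiff_pi.2 fun i => by fin_cases i; exacts [contDiff_fst, contDiff_snd]
  rw [show uncurry v = (fun z => eval z p) ∘ fun q : ℝ × ℝ => ![q.1, q.2] from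
    funext fun q => hp q.1 q.2]
  exact (contDiff_eval p).comp hpair

theorem continuous (hv : IsQk k v) : Continuous (uncurry v) :=
  hv.contDiff (n := 0).continuous

theorem swap (hv : IsQk k v) : IsQk k (fun y x => v x y) := by
  obtain ⟨p, hdeg, hp⟩ := hv
  refine ⟨rename (Equiv.swap 0 1) p, fun i => ?_, fun y x => ?_⟩
  · rw [← Equiv.swap_apply_self 0 1 i, degreeOf_rename_of_injective (Equiv.injective _)]
    exact hdeg _
  · show v x y = _
    rw [hp, eval_rename]
    congr 2
    funext i
    fin_cases i <;> rfl

theorem pd1 (hv : IsQk k v) : IsQk k (pd1 v) := by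
  obtain ⟨p, hdeg, hp⟩ := hv
  refine ⟨pderiv 0 p, fun i => (degreeOf_pderiv_le 0 i p).trans (hdeg i), fun x y => ?_⟩
  have h := hasDerivAt_eval_update p ![x, y] 0 x
  have hline : ∀ s, update ![x, y] 0 s = ![s, y] := fun s => by
    funext j; fin_cases j <;> simp
  simp only [hline] at h
  show deriv (fun t => v t y) x = _
  simp only [hp]
  exact h.deriv

theorem pd2 (hv : IsQk k v) : IsQk k (pd2 v) :=
  hv.swap.pd1.swap

theorem add (hv : IsQk k v) (hw : IsQk k w) : IsQk k (fun x y => v x y + w x y) := by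
  obtain ⟨p, hpdeg, hp⟩ := hv
  obtain ⟨q, hqdeg, hq⟩ := hw
  exact ⟨p + q, fun i => (degreeOf_add_le i p q).trans (max_le (hpdeg i) (hqdeg i)),
    fun x y => by simp [hp, hq]⟩

theorem lapl (hv : IsQk k v) : IsQk k (lapl v) :=
  hv.pd1.pd1.add hv.pd2.pd2

theorem isPk_left (hv : IsQk k v) (b : ℝ) : IsPk k (fun x => v x b) := by
  obtain ⟨p, hdeg, hp⟩ := hv
  refine ⟨Polynomial.map (eval ![b]) (finSuccEquiv ℝ 1 p),
    (Polynomial.natDegree_map_le).trans ((natDegree_finSuccEquiv p).trans_le (hdeg 0)),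
    fun x => ?_⟩
  show v x b = _
  rw [hp, ← eval_eq_eval_mv_eval']
  congr 1

theorem isPk_right (hv : IsQk k v) (a : ℝ) : IsPk k (fun y => v a y) :=
  hv.swap.isPk_left a

end IsQk

theorem contDiff_pd1 {w : ℝ → ℝ → ℝ} {m n : WithTop ℕ∞} (hw : ContDiff ℝ n (uncurry w))
    (hmn : m + 1 ≤ n) : ContDiff ℝ m (uncurry (pd1 w)) := by
  have hd : Differentiable ℝ (uncurry w) := hw.differentiable (by rintro rfl; simp at hmn)
  have hfd : uncurry (pd1 w) = fun q => fderiv ℝ (uncurry w) q (1, 0) := by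
    funext ⟨x, y⟩
    exact ((hd (x, y)).hasFDerivAt.comp_hasDerivAt x
      ((hasDerivAt_id x).prodMk (hasDerivAt_const x y))).deriv
  rw [hfd]
  exact (hw.fderiv_right hmn).clm_apply contDiff_const

theorem contDiff_pd2 {w : ℝ → ℝ → ℝ} {m n : WithTop ℕ∞} (hw : ContDiff ℝ n (uncurry w))
    (hmn : m + 1 ≤ n) : ContDiff ℝ m (uncurry (pd2 w)) :=
  (contDiff_pd1 (w := fun y x => w x y) (hw.comp (contDiff_snd.prodMk contDiff_fst)) hmn).comp
    (contDiff_snd.prodMk contDiff_fst)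

theorem continuous_pd1 {w : ℝ → ℝ → ℝ} {n : WithTop ℕ∞} (hw : ContDiff ℝ n (uncurry w))
    (hn : 1 ≤ n) : Continuous (uncurry (pd1 w)) :=
  (contDiff_pd1 (m := 0) hw (by simpa using hn)).continuous

theorem continuous_pd2 {w : ℝ → ℝ → ℝ} {n : WithTop ℕ∞} (hw : ContDiff ℝ n (uncurry w))
    (hn : 1 ≤ n) : Continuous (uncurry (pd2 w)) :=
  (contDiff_pd2 (m := 0) hw (by simpa using hn)).continuous

theorem continuous_pd1_pd1 {w : ℝ → ℝ → ℝ} (hw : ContDiff ℝ 2 (uncurry w)) :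
    Continuous (uncurry (pd1 (pd1 w))) :=
  continuous_pd1 (contDiff_pd1 (m := 1) hw (by norm_num)) le_rfl

theorem continuous_pd2_pd2 {w : ℝ → ℝ → ℝ} (hw : ContDiff ℝ 2 (uncurry w)) :
    Continuous (uncurry (pd2 (pd2 w))) :=
  continuous_pd2 (contDiff_pd2 (m := 1) hw (by norm_num)) le_rfl

theorem continuous_lapl {w : ℝ → ℝ → ℝ} (hw : ContDiff ℝ 2 (uncurry w)) :
    Continuous (uncurry (lapl w)) :=
  (continuous_pd1_pd1 hw).add (continuous_pd2_pd2 hw)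

theorem integral_mul_deriv_deriv_sub {F G : ℝ → ℝ} (hF : ContDiff ℝ 2 F) (hG : ContDiff ℝ 2 G)
    (a b : ℝ) :
    ∫ t in a..b, (F t * deriv (deriv G) t - deriv (deriv F) t * G t)
      = (F b * deriv G b - deriv F b * G b) - (F a * deriv G a - deriv F a * G a) := by
  have hF' : ContDiff ℝ 1 (deriv F) := hF.deriv'
  have hG' : ContDiff ℝ 1 (deriv G) := hG.deriv'
  have hcont : Continuous fun t => F t * deriv (deriv G) t - deriv (deriv F) t * G t :=
    (hF.continuous.mul (hG'.continuous_deriv le_rfl)).sub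
      ((hF'.continuous_deriv le_rfl).mul hG.continuous)
  refine intervalIntegral.integral_eq_sub_of_hasDerivAt
    (f := fun t => F t * deriv G t - deriv F t * G t) (fun t _ => ?_) (hcont.intervalIntegrable a b)
  have hFt := (hF.differentiable (by norm_num) t).hasDerivAt
  have hGt := (hG.differentiable (by norm_num) t).hasDerivAt
  have hF't := (hF'.differentiable one_ne_zero t).hasDerivAt
  have hG't := (hG'.differentiable one_ne_zero t).hasDerivAt
  exact ((hFt.fun_mul hG't).fun_sub (hF't.fun_mul hGt)).congr_deriv (by ring)

theorem intervalIntegral_intervalIntegral_add {A B : ℝ → ℝ → ℝ} (hA : Continuous (uncurry A))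
    (hB : Continuous (uncurry B)) (a b c d : ℝ) :
    ∫ x in a..b, ∫ y in c..d, (A x y + B x y)
      = (∫ x in a..b, ∫ y in c..d, A x y) + ∫ x in a..b, ∫ y in c..d, B x y := by
  have hinner : ∀ x, ∫ y in c..d, (A x y + B x y)
      = (∫ y in c..d, A x y) + ∫ y in c..d, B x y := fun x =>
    intervalIntegral.integral_add ((hA.uncurry_left x).intervalIntegrable c d)
      ((hB.uncurry_left x).intervalIntegrable c d)
  simp only [hinner]
  have hA' := intervalIntegral.continuous_parametric_intervalIntegral_of_continuous'
    (μ := volume) hA c d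
  have hB' := intervalIntegral.continuous_parametric_intervalIntegral_of_continuous'
    (μ := volume) hB c d
  exact intervalIntegral.integral_add (hA'.intervalIntegrable a b) (hB'.intervalIntegrable a b)

theorem intervalIntegral_intervalIntegral_sub {A B : ℝ → ℝ → ℝ} (hA : Continuous (uncurry A))
    (hB : Continuous (uncurry B)) (a b c d : ℝ) :
    ∫ x in a..b, ∫ y in c..d, (A x y - B x y)
      = (∫ x in a..b, ∫ y in c..d, A x y) - ∫ x in a..b, ∫ y in c..d, B x y := by
  have hinner : ∀ x, ∫ y in c..d, (A x y - B x y)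
      = (∫ y in c..d, A x y) - ∫ y in c..d, B x y := fun x =>
    intervalIntegral.integral_sub ((hA.uncurry_left x).intervalIntegrable c d)
      ((hB.uncurry_left x).intervalIntegrable c d)
  simp only [hinner]
  have hA' := intervalIntegral.continuous_parametric_intervalIntegral_of_continuous'
    (μ := volume) hA c d
  have hB' := intervalIntegral.continuous_parametric_intervalIntegral_of_continuous'
    (μ := volume) hB c d
  exact intervalIntegral.integral_sub (hA'.intervalIntegrable a b) (hB'.intervalIntegrable a b)

section Rectangle

variable {x0 x1 y0 y1 : ℝ}

theorem ipT_comm (f g : ℝ → ℝ → ℝ) : ipT x0 x1 y0 y1 f g = ipT x0 x1 y0 y1 g f := by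
  simp only [ipT, mul_comm]

/-- `⟨w, ∇φ·𝐧⟩_{∂T}` for `w` given by its traces on the bottom, top, left and right edges. -/
def fluxPairing (x0 x1 y0 y1 : ℝ) (wB wT wL wR : ℝ → ℝ) (φ : ℝ → ℝ → ℝ) : ℝ :=
  ((∫ x in x0..x1, wB x * (-(pd2 φ x y0))) + (∫ x in x0..x1, wT x * pd2 φ x y1)
    + (∫ y in y0..y1, wL y * (-(pd1 φ x0 y))) + (∫ y in y0..y1, wR y * pd1 φ x1 y))

/-- `⟨𝐠·𝐧, φ⟩_{∂T}`, where `gB`, `gT` are the second component of `𝐠` on the horizontal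
edges and `gL`, `gR` its first component on the vertical ones. -/
def normalPairing (x0 x1 y0 y1 : ℝ) (gB gT gL gR : ℝ → ℝ) (φ : ℝ → ℝ → ℝ) : ℝ :=
  ((∫ x in x0..x1, (-(gB x)) * φ x y0) + (∫ x in x0..x1, gT x * φ x y1)
    + (∫ y in y0..y1, (-(gL y)) * φ x0 y) + (∫ y in y0..y1, gR y * φ x1 y))

/-- `(Δ_w v, φ)_T` for `v = (v₀, v_b, 𝐯_g)`, i.e. the right-hand side of the definition of the
discrete weak Laplacian. -/
def weakLaplacianPairing (x0 x1 y0 y1 : ℝ) (v0 : ℝ → ℝ → ℝ)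
    (vbB vbT vbL vbR vgB vgT vgL vgR : ℝ → ℝ) (φ : ℝ → ℝ → ℝ) : ℝ :=
  ipT x0 x1 y0 y1 v0 (lapl φ) - fluxPairing x0 x1 y0 y1 vbB vbT vbL vbR φ
    + normalPairing x0 x1 y0 y1 vgB vgT vgL vgR φ

theorem integral_integral_mul_pd2_pd2_sub {f g : ℝ → ℝ → ℝ} (hf : ContDiff ℝ 2 (uncurry f))
    (hg : ContDiff ℝ 2 (uncurry g)) :
    ∫ x in x0..x1, ∫ y in y0..y1, (f x y * pd2 (pd2 g) x y - pd2 (pd2 f) x y * g x y)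
      = (∫ x in x0..x1, f x y0 * (-(pd2 g x y0))) + (∫ x in x0..x1, f x y1 * pd2 g x y1)
        - ((∫ x in x0..x1, (-(pd2 f x y0)) * g x y0) + ∫ x in x0..x1, pd2 f x y1 * g x y1) := by
  have hline : ∀ {w : ℝ → ℝ → ℝ}, ContDiff ℝ 2 (uncurry w) → ∀ x, ContDiff ℝ 2 (w x) :=
    fun hw x => hw.comp (contDiff_const.prodMk contDiff_id)
  have hsec : ∀ x, ∫ y in y0..y1, (f x y * pd2 (pd2 g) x y - pd2 (pd2 f) x y * g x y)
      = (f x y1 * pd2 g x y1 - pd2 f x y1 * g x y1)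
        - (f x y0 * pd2 g x y0 - pd2 f x y0 * g x y0) :=
    fun x => integral_mul_deriv_deriv_sub (hline hf x) (hline hg x) y0 y1
  simp only [hsec]
  have cf := hf.continuous
  have cg := hg.continuous
  have cf2 := continuous_pd2 hf (by norm_num)
  have cg2 := continuous_pd2 hg (by norm_num)
  simp only [mul_neg, neg_mul, intervalIntegral.integral_neg]
  rw [intervalIntegral.integral_sub, intervalIntegral.integral_sub, intervalIntegral.integral_sub]
  · ring
  all_goals exact Continuous.intervalIntegrable (by fun_prop) _ _

theorem green_second_identity {f g : ℝ → ℝ → ℝ} (hf : ContDiff ℝ 2 (uncurry f))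
    (hg : ContDiff ℝ 2 (uncurry g)) :
    ipT x0 x1 y0 y1 f (lapl g) = ipT x0 x1 y0 y1 (lapl f) g
      + fluxPairing x0 x1 y0 y1 (f · y0) (f · y1) (f x0 ·) (f x1 ·) g
      - normalPairing x0 x1 y0 y1 (pd2 f · y0) (pd2 f · y1) (pd1 f x0 ·) (pd1 f x1 ·) g := by
  have hswap : ∀ {w : ℝ → ℝ → ℝ}, ContDiff ℝ 2 (uncurry w) →
      ContDiff ℝ 2 (uncurry fun y x => w x y) :=
    fun hw => hw.comp (contDiff_snd.prodMk contDiff_fst)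
  have cf := hf.continuous
  have cg := hg.continuous
  have cf11 := continuous_pd1_pd1 hf
  have cg11 := continuous_pd1_pd1 hg
  have cf22 := continuous_pd2_pd2 hf
  have cg22 := continuous_pd2_pd2 hg
  have cfΔ := continuous_lapl hf
  have cgΔ := continuous_lapl hg
  have hsplit : ipT x0 x1 y0 y1 f (lapl g) - ipT x0 x1 y0 y1 (lapl f) g
      = (∫ x in x0..x1, ∫ y in y0..y1, (f x y * pd1 (pd1 g) x y - pd1 (pd1 f) x y * g x y))
        + ∫ x in x0..x1, ∫ y in y0..y1, (f x y * pd2 (pd2 g) x y - pd2 (pd2 f) x y * g x y) := by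
    rw [ipT, ipT, ← intervalIntegral_intervalIntegral_sub (by fun_prop) (by fun_prop),
      ← intervalIntegral_intervalIntegral_add (by fun_prop) (by fun_prop)]
    exact intervalIntegral.integral_congr fun x _ => intervalIntegral.integral_congr fun y _ => by
      simp only [lapl]; ring
  -- the `x`-direction is the `y`-direction for the transposed functions, whose `pd2` is `pd1`
  have hX : ∫ y in y0..y1, ∫ x in x0..x1, (f x y * pd1 (pd1 g) x y - pd1 (pd1 f) x y * g x y)
      = (∫ y in y0..y1, f x0 y * (-(pd1 g x0 y))) + (∫ y in y0..y1, f x1 y * pd1 g x1 y)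
        - ((∫ y in y0..y1, (-(pd1 f x0 y)) * g x0 y) + ∫ y in y0..y1, pd1 f x1 y * g x1 y) :=
    integral_integral_mul_pd2_pd2_sub (hswap hf) (hswap hg)
  have hint : IntegrableOn
      (uncurry fun x y => f x y * pd1 (pd1 g) x y - pd1 (pd1 f) x y * g x y)
      (Set.uIoc x0 x1 ×ˢ Set.uIoc y0 y1) :=
    ((by fun_prop : Continuous _).continuousOn.integrableOn_compact
      (isCompact_uIcc.prod isCompact_uIcc)).mono_set
      (Set.prod_mono Set.uIoc_subset_uIcc Set.uIoc_subset_uIcc)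
  rw [intervalIntegral_intervalIntegral_swap hint, hX,
    integral_integral_mul_pd2_pd2_sub hf hg] at hsplit
  simp only [fluxPairing, normalPairing]
  linarith

theorem IsProjT.ipT_eq {k : ℕ} {φ P q : ℝ → ℝ → ℝ} (hP : IsProjT k x0 x1 y0 y1 φ P)
    (hφ : Continuous (uncurry φ)) (hq : IsQk k q) :
    ipT x0 x1 y0 y1 P q = ipT x0 x1 y0 y1 φ q := by
  have hPc := hP.1.continuous
  have hqc := hq.continuous
  have h := hP.2 q hq
  simp only [ipT, sub_mul] at h
  rw [intervalIntegral_intervalIntegral_sub (by fun_prop) (by fun_prop)] at h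
  exact (sub_eq_zero.1 h).symm

theorem IsProjE.integral_mul_eq {k : ℕ} {a b : ℝ} {f g q : ℝ → ℝ} (h : IsProjE k a b f g)
    (hf : Continuous f) (hq : IsPk k q) :
    ∫ x in a..b, g x * q x = ∫ x in a..b, f x * q x := by
  have hgc := h.1.continuous
  have hqc := hq.continuous
  have h0 := h.2 q hq
  simp only [sub_mul] at h0
  rw [intervalIntegral.integral_sub (Continuous.intervalIntegrable (by fun_prop) _ _)
    (Continuous.intervalIntegrable (by fun_prop) _ _)] at h0
  exact (sub_eq_zero.1 h0).symm

theorem fluxPairing_eq_of_isProjE {k : ℕ} {w φ : ℝ → ℝ → ℝ} {wB wT wL wR : ℝ → ℝ}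
    (hw : Continuous (uncurry w)) (hB : IsProjE k x0 x1 (w · y0) wB)
    (hT : IsProjE k x0 x1 (w · y1) wT) (hL : IsProjE k y0 y1 (w x0 ·) wL)
    (hR : IsProjE k y0 y1 (w x1 ·) wR) (hφ : IsQk k φ) :
    fluxPairing x0 x1 y0 y1 wB wT wL wR φ
      = fluxPairing x0 x1 y0 y1 (w · y0) (w · y1) (w x0 ·) (w x1 ·) φ := by
  simp only [fluxPairing]
  rw [hB.integral_mul_eq (by fun_prop) (hφ.pd2.isPk_left y0).neg,
    hT.integral_mul_eq (by fun_prop) (hφ.pd2.isPk_left y1),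
    hL.integral_mul_eq (by fun_prop) (hφ.pd1.isPk_right x0).neg,
    hR.integral_mul_eq (by fun_prop) (hφ.pd1.isPk_right x1)]

theorem normalPairing_eq_of_isProjE {k : ℕ} {g₁ g₂ φ : ℝ → ℝ → ℝ} {gB gT gL gR : ℝ → ℝ}
    (hg₁ : Continuous (uncurry g₁)) (hg₂ : Continuous (uncurry g₂))
    (hB : IsProjE k x0 x1 (g₂ · y0) gB) (hT : IsProjE k x0 x1 (g₂ · y1) gT)
    (hL : IsProjE k y0 y1 (g₁ x0 ·) gL) (hR : IsProjE k y0 y1 (g₁ x1 ·) gR) (hφ : IsQk k φ) :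
    normalPairing x0 x1 y0 y1 gB gT gL gR φ
      = normalPairing x0 x1 y0 y1 (g₂ · y0) (g₂ · y1) (g₁ x0 ·) (g₁ x1 ·) φ := by
  simp only [normalPairing, neg_mul, intervalIntegral.integral_neg]
  rw [hB.integral_mul_eq (by fun_prop) (hφ.isPk_left y0),
    hT.integral_mul_eq (by fun_prop) (hφ.isPk_left y1),
    hL.integral_mul_eq (by fun_prop) (hφ.isPk_right x0),
    hR.integral_mul_eq (by fun_prop) (hφ.isPk_right x1)]

theorem fluxPairing_sub {w φ : ℝ → ℝ → ℝ} {vB vT vL vR : ℝ → ℝ}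
    (hw : Continuous (uncurry w)) (hφ : ContDiff ℝ 1 (uncurry φ))
    (hB : IntervalIntegrable vB volume x0 x1) (hT : IntervalIntegrable vT volume x0 x1)
    (hL : IntervalIntegrable vL volume y0 y1) (hR : IntervalIntegrable vR volume y0 y1) :
    fluxPairing x0 x1 y0 y1 (fun x => w x y0 - vB x) (fun x => w x y1 - vT x)
        (fun y => w x0 y - vL y) (fun y => w x1 y - vR y) φ
      = fluxPairing x0 x1 y0 y1 (w · y0) (w · y1) (w x0 ·) (w x1 ·) φ
        - fluxPairing x0 x1 y0 y1 vB vT vL vR φ := by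
  have hφ₁ := continuous_pd1 hφ le_rfl
  have hφ₂ := continuous_pd2 hφ le_rfl
  simp only [fluxPairing, sub_mul]
  rw [intervalIntegral.integral_sub, intervalIntegral.integral_sub,
    intervalIntegral.integral_sub, intervalIntegral.integral_sub]
  · ring
  all_goals first
    | exact Continuous.intervalIntegrable (by fun_prop) _ _
    | exact IntervalIntegrable.mul_continuousOn ‹_› (by fun_prop)

theorem normalPairing_sub {w₁ w₂ φ : ℝ → ℝ → ℝ} {vB vT vL vR : ℝ → ℝ}
    (hw₁ : Continuous (uncurry w₁)) (hw₂ : Continuous (uncurry w₂))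
    (hφ : Continuous (uncurry φ))
    (hB : IntervalIntegrable vB volume x0 x1) (hT : IntervalIntegrable vT volume x0 x1)
    (hL : IntervalIntegrable vL volume y0 y1) (hR : IntervalIntegrable vR volume y0 y1) :
    normalPairing x0 x1 y0 y1 (fun x => w₂ x y0 - vB x) (fun x => w₂ x y1 - vT x)
        (fun y => w₁ x0 y - vL y) (fun y => w₁ x1 y - vR y) φ
      = normalPairing x0 x1 y0 y1 (w₂ · y0) (w₂ · y1) (w₁ x0 ·) (w₁ x1 ·) φ
        - normalPairing x0 x1 y0 y1 vB vT vL vR φ := by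
  simp only [normalPairing, neg_mul, sub_mul, intervalIntegral.integral_neg]
  rw [intervalIntegral.integral_sub, intervalIntegral.integral_sub,
    intervalIntegral.integral_sub, intervalIntegral.integral_sub]
  · ring
  all_goals first
    | exact Continuous.intervalIntegrable (by fun_prop) _ _
    | exact IntervalIntegrable.mul_continuousOn ‹_› (by fun_prop)

theorem weakLaplacianPairing_projection_eq_ipT_lapl {k : ℕ} {u P0u φ : ℝ → ℝ → ℝ}
    {qbB qbT qbL qbR g2B g2T g1L g1R : ℝ → ℝ} (hu : ContDiff ℝ 2 (uncurry u))
    (hP0u : IsProjT k x0 x1 y0 y1 u P0u)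
    (hqbB : IsProjE k x0 x1 (u · y0) qbB) (hqbT : IsProjE k x0 x1 (u · y1) qbT)
    (hqbL : IsProjE k y0 y1 (u x0 ·) qbL) (hqbR : IsProjE k y0 y1 (u x1 ·) qbR)
    (hg2B : IsProjE k x0 x1 (pd2 u · y0) g2B) (hg2T : IsProjE k x0 x1 (pd2 u · y1) g2T)
    (hg1L : IsProjE k y0 y1 (pd1 u x0 ·) g1L) (hg1R : IsProjE k y0 y1 (pd1 u x1 ·) g1R)
    (hφ : IsQk k φ) :
    weakLaplacianPairing x0 x1 y0 y1 P0u qbB qbT qbL qbR g2B g2T g1L g1R φ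
      = ipT x0 x1 y0 y1 (lapl u) φ := by
  rw [weakLaplacianPairing, hP0u.ipT_eq hu.continuous hφ.lapl,
    fluxPairing_eq_of_isProjE hu.continuous hqbB hqbT hqbL hqbR hφ,
    normalPairing_eq_of_isProjE (continuous_pd1 hu (by norm_num))
      (continuous_pd2 hu (by norm_num)) hg2B hg2T hg1L hg1R hφ,
    green_second_identity hu hφ.contDiff]
  ring

theorem weakLaplacianPairing_eq {v0 φ : ℝ → ℝ → ℝ} {vbB vbT vbL vbR vgB vgT vgL vgR : ℝ → ℝ}
    (hv0 : ContDiff ℝ 2 (uncurry v0)) (hφ : ContDiff ℝ 2 (uncurry φ))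
    (hvbB : IntervalIntegrable vbB volume x0 x1) (hvbT : IntervalIntegrable vbT volume x0 x1)
    (hvbL : IntervalIntegrable vbL volume y0 y1) (hvbR : IntervalIntegrable vbR volume y0 y1)
    (hvgB : IntervalIntegrable vgB volume x0 x1) (hvgT : IntervalIntegrable vgT volume x0 x1)
    (hvgL : IntervalIntegrable vgL volume y0 y1) (hvgR : IntervalIntegrable vgR volume y0 y1) :
    weakLaplacianPairing x0 x1 y0 y1 v0 vbB vbT vbL vbR vgB vgT vgL vgR φ
      = ipT x0 x1 y0 y1 (lapl v0) φ
        + fluxPairing x0 x1 y0 y1 (fun x => v0 x y0 - vbB x) (fun x => v0 x y1 - vbT x)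
            (fun y => v0 x0 y - vbL y) (fun y => v0 x1 y - vbR y) φ
        - normalPairing x0 x1 y0 y1 (fun x => pd2 v0 x y0 - vgB x) (fun x => pd2 v0 x y1 - vgT x)
            (fun y => pd1 v0 x0 y - vgL y) (fun y => pd1 v0 x1 y - vgR y) φ := by
  rw [weakLaplacianPairing, green_second_identity hv0 hφ,
    fluxPairing_sub hv0.continuous (hφ.of_le (by norm_num)) hvbB hvbT hvbL hvbR,
    normalPairing_sub (continuous_pd1 hv0 (by norm_num)) (continuous_pd2 hv0 (by norm_num))
      hφ.continuous hvgB hvgT hvgL hvgR]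
  ring

end Rectangle

theorem statement18_general (k : ℕ) (x0 x1 y0 y1 : ℝ)
    (u : ℝ → ℝ → ℝ) (hu : ContDiff ℝ 2 (fun p : ℝ × ℝ => u p.1 p.2))
    -- the projections defining Q_N u
    (P0u P0Lu : ℝ → ℝ → ℝ)
    (hP0u : IsProjT k x0 x1 y0 y1 u P0u)
    (hP0Lu : IsProjT k x0 x1 y0 y1 (lapl u) P0Lu)
    (qbB qbT qbL qbR g2B g2T g1L g1R : ℝ → ℝ)
    (hqbB : IsProjE k x0 x1 (fun x => u x y0) qbB)
    (hqbT : IsProjE k x0 x1 (fun x => u x y1) qbT)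
    (hqbL : IsProjE k y0 y1 (fun y => u x0 y) qbL)
    (hqbR : IsProjE k y0 y1 (fun y => u x1 y) qbR)
    (hg2B : IsProjE k x0 x1 (fun x => pd2 u x y0) g2B)
    (hg2T : IsProjE k x0 x1 (fun x => pd2 u x y1) g2T)
    (hg1L : IsProjE k y0 y1 (fun y => pd1 u x0 y) g1L)
    (hg1R : IsProjE k y0 y1 (fun y => pd1 u x1 y) g1R)
    -- the triple v = (v₀, v_b, 𝐯_g), with L² data on each edge
    (v0 : ℝ → ℝ → ℝ) (hv0 : IsQk k v0)
    (vbB vbT vbL vbR vg2B vg2T vg1L vg1R : ℝ → ℝ)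
    (hvbB : L2Edge x0 x1 vbB) (hvbT : L2Edge x0 x1 vbT)
    (hvbL : L2Edge y0 y1 vbL) (hvbR : L2Edge y0 y1 vbR)
    (hvg2B : L2Edge x0 x1 vg2B)
    (hvg2T : L2Edge x0 x1 vg2T)
    (hvg1L : L2Edge y0 y1 vg1L)
    (hvg1R : L2Edge y0 y1 vg1R)
    -- the discrete weak Laplacian of Q_N u
    (DQ : ℝ → ℝ → ℝ)
    (hDQ : ∀ φ : ℝ → ℝ → ℝ, IsQk k φ →
      ipT x0 x1 y0 y1 DQ φ =
        ipT x0 x1 y0 y1 P0u (lapl φ)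
          - ((∫ x in x0..x1, qbB x * (-(pd2 φ x y0)))
            + (∫ x in x0..x1, qbT x * pd2 φ x y1)
            + (∫ y in y0..y1, qbL y * (-(pd1 φ x0 y)))
            + (∫ y in y0..y1, qbR y * pd1 φ x1 y))
          + ((∫ x in x0..x1, (-(g2B x)) * φ x y0)
            + (∫ x in x0..x1, g2T x * φ x y1)
            + (∫ y in y0..y1, (-(g1L y)) * φ x0 y)
            + (∫ y in y0..y1, g1R y * φ x1 y)))
    -- the discrete weak Laplacian of v
    (Dv : ℝ → ℝ → ℝ) (hDvk : IsQk k Dv)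
    (hDv : ∀ φ : ℝ → ℝ → ℝ, IsQk k φ →
      ipT x0 x1 y0 y1 Dv φ =
        ipT x0 x1 y0 y1 v0 (lapl φ)
          - ((∫ x in x0..x1, vbB x * (-(pd2 φ x y0)))
            + (∫ x in x0..x1, vbT x * pd2 φ x y1)
            + (∫ y in y0..y1, vbL y * (-(pd1 φ x0 y)))
            + (∫ y in y0..y1, vbR y * pd1 φ x1 y))
          + ((∫ x in x0..x1, (-(vg2B x)) * φ x y0)
            + (∫ x in x0..x1, vg2T x * φ x y1)
            + (∫ y in y0..y1, (-(vg1L y)) * φ x0 y)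
            + (∫ y in y0..y1, vg1R y * φ x1 y))) :
    ipT x0 x1 y0 y1 DQ Dv =
      ipT x0 x1 y0 y1 (lapl u) (lapl v0)
        + ((∫ x in x0..x1, (v0 x y0 - vbB x) * (-(pd2 P0Lu x y0)))
          + (∫ x in x0..x1, (v0 x y1 - vbT x) * pd2 P0Lu x y1)
          + (∫ y in y0..y1, (v0 x0 y - vbL y) * (-(pd1 P0Lu x0 y)))
          + (∫ y in y0..y1, (v0 x1 y - vbR y) * pd1 P0Lu x1 y))
        - ((∫ x in x0..x1, (-(pd2 v0 x y0 - vg2B x)) * P0Lu x y0)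
          + (∫ x in x0..x1, (pd2 v0 x y1 - vg2T x) * P0Lu x y1)
          + (∫ y in y0..y1, (-(pd1 v0 x0 y - vg1L y)) * P0Lu x0 y)
          + (∫ y in y0..y1, (pd1 v0 x1 y - vg1R y) * P0Lu x1 y)) := by
  calc ipT x0 x1 y0 y1 DQ Dv
      = weakLaplacianPairing x0 x1 y0 y1 P0u qbB qbT qbL qbR g2B g2T g1L g1R Dv := hDQ Dv hDvk
    _ = ipT x0 x1 y0 y1 (lapl u) Dv :=
      weakLaplacianPairing_projection_eq_ipT_lapl hu hP0u hqbB hqbT hqbL hqbR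
        hg2B hg2T hg1L hg1R hDvk
    _ = ipT x0 x1 y0 y1 Dv P0Lu := by
      rw [← hP0Lu.ipT_eq (continuous_lapl hu) hDvk, ipT_comm]
    _ = weakLaplacianPairing x0 x1 y0 y1 v0 vbB vbT vbL vbR vg2B vg2T vg1L vg1R P0Lu :=
      hDv P0Lu hP0Lu.1
    _ = ipT x0 x1 y0 y1 (lapl v0) P0Lu
        + fluxPairing x0 x1 y0 y1 (fun x => v0 x y0 - vbB x) (fun x => v0 x y1 - vbT x)
            (fun y => v0 x0 y - vbL y) (fun y => v0 x1 y - vbR y) P0Lu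
        - normalPairing x0 x1 y0 y1 (fun x => pd2 v0 x y0 - vg2B x)
            (fun x => pd2 v0 x y1 - vg2T x) (fun y => pd1 v0 x0 y - vg1L y)
            (fun y => pd1 v0 x1 y - vg1R y) P0Lu :=
      weakLaplacianPairing_eq hv0.contDiff hP0Lu.1.contDiff hvbB.1 hvbT.1 hvbL.1 hvbR.1
        hvg2B.1 hvg2T.1 hvg1L.1 hvg1R.1
    _ = _ := by
      rw [ipT_comm, hP0Lu.ipT_eq (continuous_lapl hu) hv0.lapl]
      rfl

/-- `(Δ_w(Q_N u), Δ_w v)_T = (Δu, Δv₀)_T + ⟨v₀ − v_b, ∇(Q₀Δu)·𝐧⟩_{∂T}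
− ⟨(∇v₀ − 𝐯_g)·𝐧, Q₀Δu⟩_{∂T}` on the rectangle `T = [x0,x1] × [y0,y1]`.
`DQ` is the discrete weak Laplacian of `Q_N u = (Q₀u, Q_b u, 𝐐_g(∇u))` and `Dv`
that of the triple `v = (v₀, v_b, 𝐯_g)`, both characterized by the defining identity. -/
theorem statement18 (k : ℕ) (hk : 3 ≤ k) (x0 x1 y0 y1 : ℝ) (hx : x0 < x1) (hy : y0 < y1)
    (u : ℝ → ℝ → ℝ) (hu : ContDiff ℝ 2 (fun p : ℝ × ℝ => u p.1 p.2))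
    -- the projections defining Q_N u
    (P0u P0Lu : ℝ → ℝ → ℝ)
    (hP0u : IsProjT k x0 x1 y0 y1 u P0u)
    (hP0Lu : IsProjT k x0 x1 y0 y1 (lapl u) P0Lu)
    (qbB qbT qbL qbR g1B g2B g1T g2T g1L g2L g1R g2R : ℝ → ℝ)
    (hqbB : IsProjE k x0 x1 (fun x => u x y0) qbB)
    (hqbT : IsProjE k x0 x1 (fun x => u x y1) qbT)
    (hqbL : IsProjE k y0 y1 (fun y => u x0 y) qbL)
    (hqbR : IsProjE k y0 y1 (fun y => u x1 y) qbR)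
    (hg1B : IsProjE k x0 x1 (fun x => pd1 u x y0) g1B)
    (hg2B : IsProjE k x0 x1 (fun x => pd2 u x y0) g2B)
    (hg1T : IsProjE k x0 x1 (fun x => pd1 u x y1) g1T)
    (hg2T : IsProjE k x0 x1 (fun x => pd2 u x y1) g2T)
    (hg1L : IsProjE k y0 y1 (fun y => pd1 u x0 y) g1L)
    (hg2L : IsProjE k y0 y1 (fun y => pd2 u x0 y) g2L)
    (hg1R : IsProjE k y0 y1 (fun y => pd1 u x1 y) g1R)
    (hg2R : IsProjE k y0 y1 (fun y => pd2 u x1 y) g2R)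
    -- the triple v = (v₀, v_b, 𝐯_g), with L² data on each edge
    (v0 : ℝ → ℝ → ℝ) (hv0 : IsQk k v0)
    (vbB vbT vbL vbR vg1B vg2B vg1T vg2T vg1L vg2L vg1R vg2R : ℝ → ℝ)
    (hvbB : L2Edge x0 x1 vbB) (hvbT : L2Edge x0 x1 vbT)
    (hvbL : L2Edge y0 y1 vbL) (hvbR : L2Edge y0 y1 vbR)
    (hvg1B : L2Edge x0 x1 vg1B) (hvg2B : L2Edge x0 x1 vg2B)
    (hvg1T : L2Edge x0 x1 vg1T) (hvg2T : L2Edge x0 x1 vg2T)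
    (hvg1L : L2Edge y0 y1 vg1L) (hvg2L : L2Edge y0 y1 vg2L)
    (hvg1R : L2Edge y0 y1 vg1R) (hvg2R : L2Edge y0 y1 vg2R)
    -- the discrete weak Laplacian of Q_N u
    (DQ : ℝ → ℝ → ℝ) (hDQk : IsQk k DQ)
    (hDQ : ∀ φ : ℝ → ℝ → ℝ, IsQk k φ →
      ipT x0 x1 y0 y1 DQ φ =
        ipT x0 x1 y0 y1 P0u (lapl φ)
          - ((∫ x in x0..x1, qbB x * (-(pd2 φ x y0)))
            + (∫ x in x0..x1, qbT x * pd2 φ x y1)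
            + (∫ y in y0..y1, qbL y * (-(pd1 φ x0 y)))
            + (∫ y in y0..y1, qbR y * pd1 φ x1 y))
          + ((∫ x in x0..x1, (-(g2B x)) * φ x y0)
            + (∫ x in x0..x1, g2T x * φ x y1)
            + (∫ y in y0..y1, (-(g1L y)) * φ x0 y)
            + (∫ y in y0..y1, g1R y * φ x1 y)))
    -- the discrete weak Laplacian of v
    (Dv : ℝ → ℝ → ℝ) (hDvk : IsQk k Dv)
    (hDv : ∀ φ : ℝ → ℝ → ℝ, IsQk k φ →
      ipT x0 x1 y0 y1 Dv φ =
        ipT x0 x1 y0 y1 v0 (lapl φ)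
          - ((∫ x in x0..x1, vbB x * (-(pd2 φ x y0)))
            + (∫ x in x0..x1, vbT x * pd2 φ x y1)
            + (∫ y in y0..y1, vbL y * (-(pd1 φ x0 y)))
            + (∫ y in y0..y1, vbR y * pd1 φ x1 y))
          + ((∫ x in x0..x1, (-(vg2B x)) * φ x y0)
            + (∫ x in x0..x1, vg2T x * φ x y1)
            + (∫ y in y0..y1, (-(vg1L y)) * φ x0 y)
            + (∫ y in y0..y1, vg1R y * φ x1 y))) :
    ipT x0 x1 y0 y1 DQ Dv =
      ipT x0 x1 y0 y1 (lapl u) (lapl v0)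
        + ((∫ x in x0..x1, (v0 x y0 - vbB x) * (-(pd2 P0Lu x y0)))
          + (∫ x in x0..x1, (v0 x y1 - vbT x) * pd2 P0Lu x y1)
          + (∫ y in y0..y1, (v0 x0 y - vbL y) * (-(pd1 P0Lu x0 y)))
          + (∫ y in y0..y1, (v0 x1 y - vbR y) * pd1 P0Lu x1 y))
        - ((∫ x in x0..x1, (-(pd2 v0 x y0 - vg2B x)) * P0Lu x y0)
          + (∫ x in x0..x1, (pd2 v0 x y1 - vg2T x) * P0Lu x y1)
          + (∫ y in y0..y1, (-(pd1 v0 x0 y - vg1L y)) * P0Lu x0 y)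
          + (∫ y in y0..y1, (pd1 v0 x1 y - vg1R y) * P0Lu x1 y)) :=
  statement18_general k x0 x1 y0 y1 u hu P0u P0Lu hP0u hP0Lu qbB qbT qbL qbR g2B g2T g1L g1R hqbB
    hqbT hqbL hqbR hg2B hg2T hg1L hg1R v0 hv0 vbB vbT vbL vbR vg2B vg2T vg1L vg1R hvbB hvbT hvbL
    hvbR hvg2B hvg2T hvg1L hvg1R DQ hDQ Dv hDvk hDv
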